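/- arXiv:1904.11312 — 3 statements merged into one kernel-verified Lean document; each statement's English description precedes it below -/
import Mathlib

section
/- Let π : E → B be a functor which is a cocartesian fibration (Grothendieck opfibration) of categories such that B has colimits of shape I, each fiber E_b has colimits of shape I, and each pushforward functor f_! : E_b → E_{b'} preserves colimits of shape I. Then E has colimits of shape I, and the colimit of p : I → E is computed by: forming the colimit b∞ of π∘p in B, pushing each p(i) forward to the fiber over b∞ along the colimit cocone, and taking the colimit of the resulting diagram in E_{b∞}. -/
/-!
Write `b∞` for the colimit of the bases `π ∘ p` and `ιᵢ : π (p i) ⟶ b∞` for its legs. A cocone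
over `p` with vertex `(c, y)` has a base part, which factors uniquely through some
`d : b∞ ⟶ c`, and a fiber part, made of maps `d_! ιᵢ_! (p i) ⟶ y` that form a cocone over
`d_!` of the pushed diagram. Since `d_!` preserves the colimit of the pushed diagram, the
fiber part factors uniquely through `d_! (colim ιᵢ_! (p i))`, and this is exactly a
morphism `(b∞, colim ιᵢ_! (p i)) ⟶ (c, y)` of the Grothendieck construction.
-/

open CategoryTheory CategoryTheory.Limits

universe w w' v u

noncomputable section

variable {B : Type u} [Category.{v} B] (F : B ⥤ Cat.{v, u})
variable {I : Type w} [Category.{w'} I]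

variable [HasColimitsOfShape I B]

/-- Given a diagram `p : I ⥤ Grothendieck F`, the diagram in the fiber over the
colimit of the underlying diagram obtained by pushing each `p(i)` forward along
the colimit cocone. -/
@[simps]
def pushedDiagram (p : I ⥤ Grothendieck F) :
    I ⥤ F.obj (colimit (p ⋙ Grothendieck.forget F)) where
  obj i := (F.map (colimit.ι (p ⋙ Grothendieck.forget F) i)).toFunctor.obj (p.obj i).fiber
  map {i j} φ :=
    eqToHom (by rw [← colimit.w (p ⋙ Grothendieck.forget F) φ, F.map_comp]; rfl) ≫
      (F.map (colimit.ι (p ⋙ Grothendieck.forget F) j)).toFunctor.map ((p.map φ).fiber)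
  map_id i := by
    have h : p.map (𝟙 i) = 𝟙 (p.obj i) := p.map_id i
    rw [Grothendieck.congr h, Grothendieck.id_fiber]
    simp only [eqToHom_trans]
    have key : ∀ {C D : Type u} [Category.{v} C] [Category.{v} D] (G : C ⥤ D) {X Y : C}
        (h1 : G.obj Y = G.obj X) (h2 : X = Y), eqToHom h1 ≫ G.map (eqToHom h2) = 𝟙 _ := by
      intros; subst_vars; simp
    exact key _ _ _
  map_comp {i j k} φ ψ := by
    have hb : (p.map ψ).base ≫ colimit.ι (p ⋙ Grothendieck.forget F) k
        = colimit.ι (p ⋙ Grothendieck.forget F) j :=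
      colimit.w (p ⋙ Grothendieck.forget F) ψ
    have h : (F.map (colimit.ι (p ⋙ Grothendieck.forget F) j)).toFunctor
        = (F.map ((p.map ψ).base)).toFunctor ⋙ (F.map (colimit.ι (p ⋙ Grothendieck.forget F) k)).toFunctor := by
      exact (congrArg (fun f => (F.map f).toFunctor) hb.symm).trans
        (congrArg Cat.Hom.toFunctor (F.map_comp _ _))
    rw [Grothendieck.congr (p.map_comp φ ψ), Grothendieck.comp_fiber,
      Functor.congr_hom h ((p.map φ).fiber)]
    have key : ∀ {C D : Type u} [Category.{v} C] [Category.{v} D] (G : C ⥤ D) {A B₁ B₂ : D}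
        {X X' Y Z W : C} (e : X = X') (e' : X' = Y) (f : Y ⟶ Z) (g : Z ⟶ W)
        (h1 : A = G.obj X) (h2 : A = B₁) (h3 : B₁ = G.obj Y) (h4 : G.obj Z = B₂)
        (h5 : B₂ = G.obj Z),
        eqToHom h1 ≫ G.map (eqToHom e ≫ eqToHom e' ≫ f ≫ g) =
          (eqToHom h2 ≫ eqToHom h3 ≫ G.map f ≫ eqToHom h4) ≫ eqToHom h5 ≫ G.map g := by
      intros; subst_vars; simp
    exact key (F.map (colimit.ι (p ⋙ Grothendieck.forget F) k)).toFunctor _ _ _ _ _ _ _ _ _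

namespace CategoryTheory

namespace Cat

lemma map_obj_map_obj_of_comp_eq {b c d : B} {g : b ⟶ c} {h : c ⟶ d} {k : b ⟶ d}
    (w : g ≫ h = k) (x : F.obj b) :
    (F.map h).toFunctor.obj ((F.map g).toFunctor.obj x) = (F.map k).toFunctor.obj x := by
  subst w
  simp

-- The equations `e₁ e₂ e₃` are arbitrary so that the lemma applies by unification: `simp` cannot
-- rewrite in its applications, where `(p ⋙ forget F).obj i` and `(p.obj i).base` agree only
-- after unfolding.
lemma map_eqToHom_comp_map_comp_of_comp_eq {b c d : B} {g : b ⟶ c} {h : c ⟶ d} {k : b ⟶ d}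
    (w : g ≫ h = k) {x y : F.obj b} {z : F.obj c} {a t : F.obj d} (m : x ⟶ y)
    (u : (F.map k).toFunctor.obj y ⟶ t) (e : z = (F.map g).toFunctor.obj x)
    (e₁ : (F.map h).toFunctor.obj ((F.map g).toFunctor.obj y) = (F.map k).toFunctor.obj y)
    (e₂ : (F.map h).toFunctor.obj z = a) (e₃ : a = (F.map k).toFunctor.obj x) :
    (F.map h).toFunctor.map (eqToHom e ≫ (F.map g).toFunctor.map m) ≫ eqToHom e₁ ≫ u =
      eqToHom e₂ ≫ (eqToHom e₃ ≫ (F.map k).toFunctor.map m) ≫ u := by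
  subst w e e₂
  simp [Functor.congr_hom (congrArg Cat.Hom.toFunctor (F.map_comp g h)) m]

end Cat

namespace Grothendieck

variable {F}

lemma comp_mk_eq_mk_iff {X Y : Grothendieck F} {c : B} {z : F.obj c} (f : X ⟶ Y)
    {g : Y.base ⟶ c} {g' : X.base ⟶ c} (u : (F.map g).toFunctor.obj Y.fiber ⟶ z)
    (u' : (F.map g').toFunctor.obj X.fiber ⟶ z) (hb : f.base ≫ g = g') :
    f ≫ (⟨g, u⟩ : Y ⟶ ⟨c, z⟩) = ⟨g', u'⟩ ↔
      (eqToHom (by rw [← hb, F.map_comp]; rfl) ≫ (F.map g).toFunctor.map f.fiber) ≫ u = u' := by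
  subst hb
  exact (Hom.mk.injEq _ _ _ _).to_iff.trans
    ((and_iff_right rfl).trans (heq_iff_eq.trans (by rw [Category.assoc])))

lemma comp_mk_eq_comp_mk_iff {X Y : Grothendieck F} {c : B} {z : F.obj c} (f : X ⟶ Y)
    {g : Y.base ⟶ c} (u u' : (F.map g).toFunctor.obj Y.fiber ⟶ z) :
    f ≫ (⟨g, u⟩ : Y ⟶ ⟨c, z⟩) = f ≫ (⟨g, u'⟩ : Y ⟶ ⟨c, z⟩) ↔
      (F.map g).toFunctor.map f.fiber ≫ u = (F.map g).toFunctor.map f.fiber ≫ u' := by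
  refine (comp_mk_eq_mk_iff f u (eqToHom (by simp) ≫ (F.map g).toFunctor.map f.fiber ≫ u')
    rfl).trans ?_
  simpa only [Category.assoc] using cancel_epi _

end Grothendieck

end CategoryTheory

open Grothendieck

section BaseDesc

variable {p : I ⥤ Grothendieck F}

def baseDesc (s : Cocone p) : colimit (p ⋙ Grothendieck.forget F) ⟶ s.pt.base :=
  colimit.desc _ ((Grothendieck.forget F).mapCocone s)

lemma ι_baseDesc (s : Cocone p) (i : I) :
    colimit.ι (p ⋙ Grothendieck.forget F) i ≫ baseDesc F s = (s.ι.app i).base :=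
  colimit.ι_desc _ _

end BaseDesc

section PushedColimit

variable (p : I ⥤ Grothendieck F) [HasColimit (pushedDiagram F p)]

abbrev pushedColimit : Grothendieck F :=
  ⟨colimit (p ⋙ Grothendieck.forget F), colimit (pushedDiagram F p)⟩

def toPushedColimit (i : I) : p.obj i ⟶ pushedColimit F p :=
  ⟨colimit.ι (p ⋙ Grothendieck.forget F) i, colimit.ι (pushedDiagram F p) i⟩

@[simp]
lemma map_comp_toPushedColimit {i j : I} (φ : i ⟶ j) :
    p.map φ ≫ toPushedColimit F p j = toPushedColimit F p i :=
  (comp_mk_eq_mk_iff _ _ _ (colimit.w (p ⋙ Grothendieck.forget F) φ)).2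
    (colimit.w (pushedDiagram F p) φ)

def pushedColimitCocone : Cocone p where
  pt := pushedColimit F p
  ι.app := toPushedColimit F p
  ι.naturality i j φ := by simp

variable {p}

def pushedDiagramCocone (s : Cocone p) :
    Cocone (pushedDiagram F p ⋙ (F.map (baseDesc F s)).toFunctor) where
  pt := s.pt.fiber
  ι.app i := eqToHom (Cat.map_obj_map_obj_of_comp_eq F (ι_baseDesc F s i) _) ≫ (s.ι.app i).fiber
  ι.naturality i j φ := by
    have hw := (comp_mk_eq_mk_iff (p.map φ) _ _ (congrArg Hom.base (s.w φ))).1 (s.w φ)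
    refine Eq.trans ?_ (Category.comp_id _).symm
    rw [← hw]
    exact Cat.map_eqToHom_comp_map_comp_of_comp_eq F (ι_baseDesc F s j) _ _ _ _ _ _

variable (hpres : ∀ {c : B} (f : colimit (p ⋙ Grothendieck.forget F) ⟶ c),
  PreservesColimit (pushedDiagram F p) (F.map f).toFunctor)
include hpres

def isColimitMapColimitCocone {c : B} (f : colimit (p ⋙ Grothendieck.forget F) ⟶ c) :
    IsColimit ((F.map f).toFunctor.mapCocone (colimit.cocone (pushedDiagram F p))) :=
  have := hpres f
  isColimitOfPreserves _ (colimit.isColimit _)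

lemma pushedColimit_hom_ext {Z : Grothendieck F} {f f' : pushedColimit F p ⟶ Z}
    (h : ∀ i, toPushedColimit F p i ≫ f = toPushedColimit F p i ≫ f') : f = f' := by
  obtain ⟨b, u⟩ := f
  obtain ⟨b', u'⟩ := f'
  obtain rfl : b = b' := colimit.hom_ext fun i => congrArg Hom.base (h i)
  congr 1
  exact (isColimitMapColimitCocone F hpres b).hom_ext fun i =>
    (comp_mk_eq_comp_mk_iff _ _ _).1 (h i)

def pushedColimitDesc (s : Cocone p) : pushedColimit F p ⟶ s.pt :=
  ⟨baseDesc F s, (isColimitMapColimitCocone F hpres _).desc (pushedDiagramCocone F s)⟩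

lemma toPushedColimit_comp_pushedColimitDesc (s : Cocone p) (i : I) :
    toPushedColimit F p i ≫ pushedColimitDesc F hpres s = s.ι.app i :=
  (comp_mk_eq_mk_iff _ _ _ (ι_baseDesc F s i)).2 (by
    rw [Category.assoc]
    exact (eqToHom_comp_iff _ _ _).2
      ((isColimitMapColimitCocone F hpres _).fac (pushedDiagramCocone F s) i))

def isColimitPushedColimitCocone : IsColimit (pushedColimitCocone F p) where
  desc := pushedColimitDesc F hpres
  fac := toPushedColimit_comp_pushedColimitDesc F hpres
  uniq s _ hm := pushedColimit_hom_ext F hpres fun i =>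
    (hm i).trans (toPushedColimit_comp_pushedColimitDesc F hpres s i).symm

end PushedColimit

/-- If `π : Grothendieck F → B` is the cocartesian fibration corresponding to
`F : B ⥤ Cat`, `B` has colimits of shape `I`, each fiber has colimits of shape `I`
and each pushforward functor preserves them, then the total category has colimits
of shape `I`, and the colimit of `p : I ⥤ Grothendieck F` is computed by taking
the colimit `b∞` of the underlying diagram, pushing `p` forward to the fiber over
`b∞` along the colimit cocone, and taking the colimit there. -/
theorem grothendieck_hasColimitsOfShape_and_formula
    [∀ b : B, HasColimitsOfShape I (F.obj b)]
    (hpres : ∀ {b b' : B} (f : b ⟶ b'), PreservesColimitsOfShape I (F.map f).toFunctor) :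
    HasColimitsOfShape I (Grothendieck F) ∧
    ∀ p : I ⥤ Grothendieck F, ∃ c : Cocone p, Nonempty (IsColimit c) ∧
      Nonempty (c.pt ≅
        ⟨colimit (p ⋙ Grothendieck.forget F), colimit (pushedDiagram F p)⟩) := by
  have hlim (p : I ⥤ Grothendieck F) : IsColimit (pushedColimitCocone F p) :=
    isColimitPushedColimitCocone F fun f => have := hpres f; inferInstance
  exact ⟨⟨fun p => ⟨_, hlim p⟩⟩, fun p => ⟨_, ⟨hlim p⟩, ⟨Iso.refl _⟩⟩⟩

end
end

section
/- Let π : E → A × B be a functor of categories such that the composite π_A : E → A is a Grothendieck fibration whose cartesian morphisms map to isomorphisms under the projection to B, and for every a ∈ A the induced functor on fibers E_a → B is a Grothendieck opfibration. Then the composite π_B : E → B is a Grothendieck opfibration, and a morphism of E lying in a fiber E_a which is opcartesian for E_a → B is opcartesian for π_B. -/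
open CategoryTheory

universe v₁ v₂ v₃ u₁ u₂ u₃

section

variable {E : Type u₁} [Category.{v₁} E] {A : Type u₂} [Category.{v₂} A]
  {B : Type u₃} [Category.{v₃} B]

/-- A morphism `φ : x ⟶ y` is `q`-cartesian. -/
def IsCartesianMor {D : Type*} [Category D] (q : E ⥤ D) {x y : E} (φ : x ⟶ y) : Prop :=
  ∀ {z : E} (ψ : z ⟶ y) (g : q.obj z ⟶ q.obj x), q.map ψ = g ≫ q.map φ →
    ∃! χ : z ⟶ x, q.map χ = g ∧ χ ≫ φ = ψ

/-- A morphism `φ : x ⟶ y` is `q`-opcartesian. -/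
def IsOpcartesianMor {D : Type*} [Category D] (q : E ⥤ D) {x y : E} (φ : x ⟶ y) : Prop :=
  ∀ {z : E} (ψ : x ⟶ z) (g : q.obj y ⟶ q.obj z), q.map ψ = q.map φ ≫ g →
    ∃! χ : y ⟶ z, q.map χ = g ∧ φ ≫ χ = ψ

/-- `q : E ⥤ D` is a Grothendieck fibration: every morphism of `D` with target in
the image admits a cartesian lift. -/
def IsGrothendieckFibration {D : Type*} [Category D] (q : E ⥤ D) : Prop :=
  ∀ (y : E) (d : D) (f : d ⟶ q.obj y),
    ∃ (x : E) (φ : x ⟶ y) (h : q.obj x = d),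
      IsCartesianMor q φ ∧ q.map φ = eqToHom h ≫ f

/-- `q : E ⥤ D` is a Grothendieck opfibration: every morphism of `D` with source in
the image admits an opcartesian lift. -/
def IsGrothendieckOpfibration {D : Type*} [Category D] (q : E ⥤ D) : Prop :=
  ∀ (x : E) (d : D) (f : q.obj x ⟶ d),
    ∃ (y : E) (φ : x ⟶ y) (h : q.obj y = d),
      IsOpcartesianMor q φ ∧ q.map φ ≫ eqToHom h = f

/-!
Let `φ : x ⟶ y` in `E_a` be opcartesian for `E_a ⥤ B` and test it against `ψ : x ⟶ z`. Take a
`π_A`-cartesian lift `θ : w ⟶ z` of `π_A ψ` with `w` over `a`: composing with `θ` is a bijection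
from vertical maps into `w` onto maps into `z` lying over `π_A ψ`, and `π_B θ` is invertible, so
the test problem for `ψ` is equivalent to one inside the fibre `E_a`, which `φ` solves. Hence
opcartesian lifts in the fibres are opcartesian lifts for `π_B`.
-/

open Functor IsHomLift

lemma Functor.IsHomLift.of_vertical_comp (p : E ⥤ A) {a b : A} (f : a ⟶ b) {x y z : E}
    (φ : x ⟶ y) (χ : y ⟶ z) [p.IsHomLift (𝟙 a) φ] [p.IsHomLift f (φ ≫ χ)] :
    p.IsHomLift f χ := by
  have hφ := fac' p (𝟙 a) φ
  have hφχ := fac' p f (φ ≫ χ)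
  apply of_fac' p f χ (codomain_eq p (𝟙 a) φ) (codomain_eq p f (φ ≫ χ))
  rw [p.map_comp, hφ] at hφχ
  simp only [Category.id_comp, eqToHom_trans, eqToHom_comp_iff] at hφχ
  simpa using hφχ

lemma IsCartesianMor.existsUnique_fiber_comp {p : E ⥤ A} {a b : A} {f : a ⟶ b}
    {w : Fiber p a} {z : E} {θ : Fiber.fiberInclusion.obj w ⟶ z} (hθ : IsCartesianMor p θ)
    (hθf : p.IsHomLift f θ) {x : Fiber p a} {ψ : Fiber.fiberInclusion.obj x ⟶ z}
    (hψf : p.IsHomLift f ψ) :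
    ∃! ψ' : x ⟶ w, Fiber.fiberInclusion.map ψ' ≫ θ = ψ := by
  have hx : p.obj (Fiber.fiberInclusion.obj x) = a := x.2
  have hw : p.obj (Fiber.fiberInclusion.obj w) = a := w.2
  have vertical_iff (χ : Fiber.fiberInclusion.obj x ⟶ Fiber.fiberInclusion.obj w) :
      p.IsHomLift (𝟙 a) χ ↔ p.map χ = eqToHom (hx.trans hw.symm) :=
    ⟨fun _ ↦ by simp [fac' p (𝟙 a) χ], fun h ↦ of_fac' p _ χ hx hw (by simp [h])⟩
  have hψ : p.map ψ = eqToHom (hx.trans hw.symm) ≫ p.map θ := by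
    simp [fac' p f ψ, fac' p f θ]
  obtain ⟨ψ', ⟨hψ'_vert, hψ'⟩, hψ'_uniq⟩ := hθ ψ _ hψ
  exact ⟨⟨ψ', (vertical_iff ψ').2 hψ'_vert⟩, hψ', fun χ hχ ↦ Fiber.hom_ext
    (hψ'_uniq _ ⟨(vertical_iff _).1 inferInstance, hχ⟩)⟩

theorem IsOpcartesianMor.of_fiber {p : E ⥤ A} {q : E ⥤ B} (h1 : IsGrothendieckFibration p)
    (h2 : ∀ {x y : E} (φ : x ⟶ y), IsCartesianMor p φ → IsIso (q.map φ))
    {a : A} {x y : Fiber p a} {φ : x ⟶ y}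
    (hφ : IsOpcartesianMor ((Fiber.fiberInclusion : Fiber p a ⥤ E) ⋙ q) φ) :
    IsOpcartesianMor q (Fiber.fiberInclusion.map φ) := by
  intro z ψ g hψg
  have hx : p.obj (Fiber.fiberInclusion.obj x) = a := x.2
  let f : a ⟶ p.obj z := eqToHom hx.symm ≫ p.map ψ
  obtain ⟨w, θ, hw, hθ, hθ_map⟩ := h1 z a f
  change Fiber.fiberInclusion.obj (Fiber.mk hw) ⟶ z at θ
  have hθf : p.IsHomLift f θ := of_fac' p f θ hw rfl (by simpa using hθ_map)
  have hψf : p.IsHomLift f ψ := of_fac' p f ψ hx rfl (by simp [f])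
  have : IsIso (q.map θ) := h2 θ hθ
  obtain ⟨ψ', hψ', hψ'_uniq⟩ := hθ.existsUnique_fiber_comp (w := Fiber.mk hw) hθf hψf
  have hqψ' : q.map (Fiber.fiberInclusion.map ψ') ≫ q.map θ =
      q.map (Fiber.fiberInclusion.map φ) ≫ g := by
    rw [← q.map_comp, hψ', hψg]
  obtain ⟨χ', ⟨hχ'g, hχ'⟩, hχ'_uniq⟩ :=
    hφ ψ' (g ≫ inv (q.map θ)) (((IsIso.eq_comp_inv _).2 hqψ').trans (Category.assoc _ _ _))
  refine ⟨Fiber.fiberInclusion.map χ' ≫ θ, ⟨?_, ?_⟩, ?_⟩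
  · rw [q.map_comp, ← Functor.comp_map, hχ'g, Category.assoc, IsIso.inv_hom_id,
      Category.comp_id]
  · rw [← Category.assoc, ← Functor.map_comp, hχ', hψ']
  rintro χ ⟨hχg, hχ⟩
  have : p.IsHomLift f (Fiber.fiberInclusion.map φ ≫ χ) := hχ ▸ hψf
  have hχf : p.IsHomLift f χ := IsHomLift.of_vertical_comp p f (Fiber.fiberInclusion.map φ) χ
  obtain ⟨χ₀, hχ₀, -⟩ := hθ.existsUnique_fiber_comp (w := Fiber.mk hw) hθf hχf
  have hφχ₀ : φ ≫ χ₀ = ψ' := hψ'_uniq _ <| by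
    dsimp only
    rw [Functor.map_comp, Category.assoc, hχ₀, hχ]
  have hqχ₀ : (Fiber.fiberInclusion ⋙ q).map χ₀ = g ≫ inv (q.map θ) := by
    rw [IsIso.eq_comp_inv, Functor.comp_map, ← q.map_comp, hχ₀, hχg]
  rw [← hχ₀, hχ'_uniq χ₀ ⟨hqχ₀, hφχ₀⟩]

theorem isGrothendieckOpfibration_of_fibers (p : E ⥤ A) (q : E ⥤ B)
    (h1 : IsGrothendieckFibration p)
    (h2 : ∀ {x y : E} (φ : x ⟶ y), IsCartesianMor p φ → IsIso (q.map φ))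
    (h3 : ∀ a : A, IsGrothendieckOpfibration ((Fiber.fiberInclusion : Fiber p a ⥤ E) ⋙ q)) :
    IsGrothendieckOpfibration q := by
  intro x b f
  obtain ⟨y, φ, hy, hφ, hφf⟩ := h3 (p.obj x) (Fiber.mk rfl) b f
  exact ⟨y.1, φ.1, hy, hφ.of_fiber h1 h2, hφf⟩

/-- Let `π : E ⥤ A × B` be such that the composite `π_A : E ⥤ A` is a Grothendieck
fibration whose cartesian morphisms map to isomorphisms in `B`, and such that for
every `a : A` the induced functor on fibers `E_a ⥤ B` is a Grothendieck
opfibration. Then `π_B : E ⥤ B` is a Grothendieck opfibration, and every morphism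
of a fiber `E_a` which is opcartesian for `E_a ⥤ B` is opcartesian for `π_B`. -/
theorem projection_opfibration (π : E ⥤ A × B)
    (h1 : IsGrothendieckFibration (π ⋙ CategoryTheory.Prod.fst A B))
    (h2 : ∀ {x y : E} (φ : x ⟶ y), IsCartesianMor (π ⋙ CategoryTheory.Prod.fst A B) φ →
      IsIso ((π ⋙ CategoryTheory.Prod.snd A B).map φ))
    (h3 : ∀ a : A, IsGrothendieckOpfibration
      ((Functor.Fiber.fiberInclusion :
          Functor.Fiber (π ⋙ CategoryTheory.Prod.fst A B) a ⥤ E) ⋙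
        π ⋙ CategoryTheory.Prod.snd A B)) :
    IsGrothendieckOpfibration (π ⋙ CategoryTheory.Prod.snd A B) ∧
    ∀ (a : A) (x y : Functor.Fiber (π ⋙ CategoryTheory.Prod.fst A B) a) (φ : x ⟶ y),
      IsOpcartesianMor
        ((Functor.Fiber.fiberInclusion :
            Functor.Fiber (π ⋙ CategoryTheory.Prod.fst A B) a ⥤ E) ⋙
          π ⋙ CategoryTheory.Prod.snd A B) φ →
      IsOpcartesianMor (π ⋙ CategoryTheory.Prod.snd A B)
        (Functor.Fiber.fiberInclusion.map φ) :=
  ⟨isGrothendieckOpfibration_of_fibers _ _ h1 h2 h3, fun _ _ _ _ hφ ↦ hφ.of_fiber h1 h2⟩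

end
end

section
/- Let C be a category with pushouts and finite coproducts, viewed as monoidal under coproduct. Given canonical-monoid objects A, B, C and cospans A → M ← B and B → N ← C (viewed as bimodules), the relative tensor product M ⊗_B N (the coequalizer of the two maps M ⊔ B ⊔ N ⇉ M ⊔ N) is canonically isomorphic to the pushout M ⊔_B N of the cospan composite; hence composition of bimodules in (C, ⊔) agrees with composition of cospans by pushout. -/
/-!
A map `f : M ⨿ N ⟶ Z` coequalizes the two actions of `B` exactly when its components
`inl ≫ f` and `inr ≫ f` agree on `B`, so coforks over `M ⨿ N` are the same thing as cocones
on the span `M ← B → N`, and the coequalizer is the pushout.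
-/

open CategoryTheory CategoryTheory.Limits

section
variable {C : Type*} [Category C] [HasFiniteCoproducts C] [HasPushouts C]
variable {A B X M N : C}

/-- The first of the two canonical maps `M ⊔ B ⊔ N ⇉ M ⊔ N`: it acts on `M`,
sending the summand `B` into `M` via `b₁`. -/
noncomputable def actOnM (b₁ : B ⟶ M) : M ⨿ (B ⨿ N) ⟶ M ⨿ N :=
  coprod.desc coprod.inl (coprod.desc (b₁ ≫ coprod.inl) coprod.inr)

/-- The second of the two canonical maps `M ⊔ B ⊔ N ⇉ M ⊔ N`: it acts on `N`,
sending the summand `B` into `N` via `b₂`. -/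
noncomputable def actOnN (b₂ : B ⟶ N) : M ⨿ (B ⨿ N) ⟶ M ⨿ N :=
  coprod.desc coprod.inl (coprod.desc (b₂ ≫ coprod.inr) coprod.inr)

end

section
variable {C : Type*} [Category C] [HasFiniteCoproducts C] {B M N : C}

theorem actOnM_comp_eq_actOnN_comp_iff (b₁ : B ⟶ M) (b₂ : B ⟶ N) {Z : C} (f : M ⨿ N ⟶ Z) :
    actOnM b₁ ≫ f = actOnN b₂ ≫ f ↔ b₁ ≫ coprod.inl ≫ f = b₂ ≫ coprod.inr ≫ f := by
  constructor
  · intro h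
    simpa [actOnM, actOnN, coprod.inl_desc, coprod.inr_desc, coprod.inr_desc_assoc]
      using (coprod.inl ≫ coprod.inr) ≫= h
  · intro h
    ext <;> simp [actOnM, actOnN, h]

end

section
variable {C : Type*} [Category C] [HasFiniteCoproducts C] [HasPushouts C]
variable {A B X M N : C}

theorem relativeTensor_eq_pushout (b₁ : B ⟶ M) (b₂ : B ⟶ N) :
    Nonempty (IsColimit (Cofork.ofπ (f := actOnM (N := N) b₁) (g := actOnN (M := M) b₂)
      (coprod.desc (pushout.inl b₁ b₂) (pushout.inr b₁ b₂))
      (by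
        apply coprod.hom_ext
        · simp [actOnM, actOnN, coprod.inl_desc, coprod.inr_desc, coprod.inl_desc_assoc, coprod.inr_desc_assoc]
        · apply coprod.hom_ext
          · simp [actOnM, actOnN, pushout.condition, coprod.inl_desc, coprod.inr_desc, coprod.inl_desc_assoc, coprod.inr_desc_assoc]
          · simp [actOnM, actOnN, coprod.inl_desc, coprod.inr_desc, coprod.inl_desc_assoc, coprod.inr_desc_assoc]))) := by
  refine ⟨Cofork.IsColimit.mk _
    (fun s => pushout.desc (coprod.inl ≫ s.π) (coprod.inr ≫ s.π)
      ((actOnM_comp_eq_actOnN_comp_iff b₁ b₂ s.π).1 s.condition))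
    (fun s => by ext <;> simp [coprod.inl_desc, coprod.inr_desc, pushout.inl_desc, pushout.inr_desc])
    (fun s m hm => ?_)⟩
  apply pushout.hom_ext
  · simpa [coprod.inl_desc, pushout.inl_desc] using coprod.inl ≫= hm
  · simpa [coprod.inr_desc, pushout.inr_desc] using coprod.inr ≫= hm

end
end
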